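/- For every polynomial f ∈ ℂ[X] and every k with 1 ≤ k ≤ n−1, one has U_{k+1} f(y_k) = f(y_{k+1}) U_{k+1} in H_n(q); consequently, if f(y_k) = 0 then f(y_{k+1}) · (q y_k − q^{-1} y_{k+1}) · (q y_{k+1} − q^{-1} y_k) = 0. -/

import Mathlib

open FreeAlgebra in
/-- Defining relations of the A-type Hecke algebra `H_n(q)` on generators
`σ_1, …, σ_{n-1}` (generator `i : Fin (n-1)` represents `σ_{i+1}`). -/
inductive HeckeRel (n : ℕ) (q : ℂ) :
    FreeAlgebra ℂ (Fin (n - 1)) → FreeAlgebra ℂ (Fin (n - 1)) → Prop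
  | braid (i j : Fin (n - 1)) (h : (i : ℕ) + 1 = (j : ℕ)) :
      HeckeRel n q (ι ℂ i * ι ℂ j * ι ℂ i) (ι ℂ j * ι ℂ i * ι ℂ j)
  | comm (i j : Fin (n - 1)) (h : (i : ℕ) + 1 < (j : ℕ)) :
      HeckeRel n q (ι ℂ i * ι ℂ j) (ι ℂ j * ι ℂ i)
  | quad (i : Fin (n - 1)) :
      HeckeRel n q (ι ℂ i * ι ℂ i) (1 + (q - q⁻¹) • ι ℂ i)

/-- The A-type Hecke algebra `H_n(q)`. -/
abbrev HeckeAlgebra (n : ℕ) (q : ℂ) := RingQuot (HeckeRel n q)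

/-- The generator `σ_k` (1-based: valid for `1 ≤ k ≤ n-1`; junk value `1` otherwise). -/
noncomputable def heckeGen (n : ℕ) (q : ℂ) (k : ℕ) : HeckeAlgebra n q :=
  if h : k - 1 < n - 1 then RingQuot.mkAlgHom ℂ (HeckeRel n q) (FreeAlgebra.ι ℂ ⟨k - 1, h⟩)
  else 1

/-- The Jucys–Murphy elements, 1-based: `jm 1 = 1`, `jm (i+1) = σ_i * jm i * σ_i`. -/
noncomputable def jm (n : ℕ) (q : ℂ) : ℕ → HeckeAlgebra n q
  | 0 => 1
  | 1 => 1
  | (i + 2) => heckeGen n q (i + 1) * jm n q (i + 1) * heckeGen n q (i + 1)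


/-- The intertwining element `U_{k+1} = σ_k y_k − y_k σ_k`. -/
noncomputable def heckeU (n : ℕ) (q : ℂ) (k : ℕ) : HeckeAlgebra n q :=
  heckeGen n q k * jm n q k - jm n q k * heckeGen n q k

/-!
Write `s = σ_k`, `y = y_k`, `t = y_{k+1} = s y s` and `c = q - q⁻¹`, so that `s² = 1 + c s`,
and `y t = t y` by induction on `k` through the braid relation. The quadratic relation gives
`t s = s y + c t`, which together with `y t = t y` yields `U y = t U` for `U = s y - y s`,
hence `U f(y) = f(t) U`. The same identities give
`U² = (2 + c²) y t - y² - t² = (q y - q⁻¹ t)(q t - q⁻¹ y)`,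
so `f(y) = 0` forces `f(t) U² = U f(y) U = 0`.
-/

theorem SemiconjBy.aeval_right {R A : Type*} [CommSemiring R] [Semiring A] [Algebra R A]
    {a x z : A} (h : SemiconjBy a x z) (p : Polynomial R) :
    SemiconjBy a (Polynomial.aeval x p) (Polynomial.aeval z p) := by
  induction p using Polynomial.induction_on' with
  | add p r hp hr => simpa only [map_add] using hp.add_right hr
  | monomial j r =>
    simpa only [Polynomial.aeval_monomial] using
      SemiconjBy.mul_right (Algebra.commute_algebraMap_right r a) (h.pow_right j)

section Intertwiner

variable {K A : Type*} [CommRing K] [Ring A] [Algebra K A] {c : K} {s y : A}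

theorem conj_mul_of_mul_self_eq (hs : s * s = 1 + c • s) :
    s * y * s * s = s * y + c • (s * y * s) := by
  rw [mul_assoc (s * y), hs, mul_add, mul_one, mul_smul_comm]

theorem conj_mul_mul_of_commute (hs : s * s = 1 + c • s) (hyt : Commute y (s * y * s)) :
    s * y * s * y * s = y * s * y + c • (y * (s * y * s)) := by
  rw [← hyt.eq, mul_assoc, conj_mul_of_mul_self_eq hs, mul_add, mul_smul_comm, ← mul_assoc]

theorem semiconjBy_sub_of_commute (hs : s * s = 1 + c • s) (hyt : Commute y (s * y * s)) :
    SemiconjBy (s * y - y * s) y (s * y * s) := by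
  have h1 : s * y * s * s * y = s * y * y + c • (s * y * s * y) := by
    rw [conj_mul_of_mul_self_eq hs, add_mul, smul_mul_assoc]
  calc (s * y - y * s) * y = s * y * s * s * y - s * y * s * y * s := by
        rw [h1, conj_mul_mul_of_commute hs hyt, hyt.eq]; noncomm_ring
    _ = s * y * s * (s * y - y * s) := by noncomm_ring

theorem sub_mul_self_of_commute (hs : s * s = 1 + c • s) (hyt : Commute y (s * y * s)) :
    (s * y - y * s) * (s * y - y * s) =
      (2 + c ^ 2) • (y * (s * y * s)) - y * y - s * y * s * (s * y * s) := by
  have hUs : (s * y - y * s) * s = s * y * s - y - c • (y * s) := by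
    rw [sub_mul, mul_assoc y, hs]; noncomm_ring
  calc (s * y - y * s) * (s * y - y * s)
      = (s * y - y * s) * s * y - (s * y - y * s) * y * s := by noncomm_ring
    _ = (s * y * s - y - c • (y * s)) * y - s * y * s * (s * y * s - y - c • (y * s)) := by
        rw [hUs, (semiconjBy_sub_of_commute hs hyt).eq, mul_assoc (s * y * s), hUs]
    _ = 2 • (y * (s * y * s)) - y * y - s * y * s * (s * y * s)
          + c • (s * y * s * y * s - y * s * y) := by
        rw [hyt.eq]
        simp only [sub_mul, mul_sub, smul_sub, smul_mul_assoc, mul_smul_comm, mul_assoc]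
        abel
    _ = _ := by
        rw [conj_mul_mul_of_commute hs hyt, add_sub_cancel_left]; module

end Intertwiner

theorem sub_mul_self_eq_of_commute {K A : Type*} [Field K] [Ring A] [Algebra K A] {q : K}
    {s y : A} (hq : q ≠ 0) (hs : s * s = 1 + (q - q⁻¹) • s) (hyt : Commute y (s * y * s)) :
    (s * y - y * s) * (s * y - y * s) =
      (q • y - q⁻¹ • (s * y * s)) * (q • (s * y * s) - q⁻¹ • y) := by
  have hc : 2 + (q - q⁻¹) ^ 2 = q ^ 2 + q⁻¹ ^ 2 := by field_simp; ring
  rw [sub_mul_self_of_commute hs hyt, hc]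
  simp only [sub_mul, mul_sub, smul_mul_smul_comm, ← hyt.eq, mul_inv_cancel₀ hq,
    inv_mul_cancel₀ hq]
  module

section Braid

variable {R : Type*} [Ring R] {a b z : R}

theorem conj_mul_conj_of_braid (hbz : Commute b z) (hbraid : a * b * a = b * a * b) :
    a * z * a * (b * (a * z * a) * b) = a * b * (z * (a * z * a)) * b * a :=
  calc a * z * a * (b * (a * z * a) * b)
      = a * z * (b * a * b) * z * a * b := by rw [← hbraid]; noncomm_ring
    _ = a * (z * b) * a * (b * z) * a * b := by noncomm_ring
    _ = a * (b * z) * a * (z * b) * a * b := by rw [hbz.eq]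
    _ = a * b * z * a * z * (a * b * a) := by rw [hbraid]; noncomm_ring
    _ = a * b * (z * (a * z * a)) * b * a := by noncomm_ring

theorem commute_conj_of_braid (hbz : Commute b z) (hbraid : a * b * a = b * a * b)
    (hz : Commute z (a * z * a)) : Commute (a * z * a) (b * (a * z * a) * b) := by
  -- the mirror image of `conj_mul_conj_of_braid`, read in `Rᵐᵒᵖ`
  have hmirror : b * (a * z * a) * b * (a * z * a) = a * b * (a * z * a * z) * b * a := by
    simpa only [MulOpposite.unop_mul, MulOpposite.unop_op, mul_assoc] using
      congrArg MulOpposite.unop <| conj_mul_conj_of_braid (a := MulOpposite.op a)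
        (z := MulOpposite.op z) hbz.op
        (by simpa only [← MulOpposite.op_mul, mul_assoc] using congrArg MulOpposite.op hbraid)
  rw [Commute, SemiconjBy, conj_mul_conj_of_braid hbz hbraid, hmirror, hz.eq]

end Braid

section Hecke

variable (n : ℕ) (q : ℂ)

theorem heckeGen_mul_self {k : ℕ} (hk1 : 1 ≤ k) (hkn : k ≤ n - 1) :
    heckeGen n q k * heckeGen n q k = 1 + (q - q⁻¹) • heckeGen n q k := by
  have hk : k - 1 < n - 1 := by omega
  rw [heckeGen, dif_pos hk, ← map_mul, RingQuot.mkAlgHom_rel ℂ (HeckeRel.quad ⟨k - 1, hk⟩),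
    map_add, map_one, map_smul]

theorem heckeGen_braid {k : ℕ} (hk1 : 1 ≤ k) (hkn : k + 1 ≤ n - 1) :
    heckeGen n q k * heckeGen n q (k + 1) * heckeGen n q k =
      heckeGen n q (k + 1) * heckeGen n q k * heckeGen n q (k + 1) := by
  have hk : k - 1 < n - 1 := by omega
  have hk' : k + 1 - 1 < n - 1 := by omega
  simp only [heckeGen, dif_pos hk, dif_pos hk', ← map_mul]
  exact RingQuot.mkAlgHom_rel ℂ (HeckeRel.braid ⟨k - 1, hk⟩ ⟨k + 1 - 1, hk'⟩ (by simp; omega))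

theorem commute_heckeGen_heckeGen {i j : ℕ} (hi : 1 ≤ i) (hij : i + 2 ≤ j) :
    Commute (heckeGen n q i) (heckeGen n q j) := by
  by_cases hj : j - 1 < n - 1
  · have hi' : i - 1 < n - 1 := by omega
    simp only [Commute, SemiconjBy, heckeGen, dif_pos hi', dif_pos hj, ← map_mul]
    exact RingQuot.mkAlgHom_rel ℂ (HeckeRel.comm ⟨i - 1, hi'⟩ ⟨j - 1, hj⟩ (by simp; omega))
  · simp only [heckeGen, dif_neg hj]
    exact Commute.one_right _

theorem commute_heckeGen_jm {k : ℕ} : ∀ {m : ℕ}, m < k → Commute (heckeGen n q k) (jm n q m)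
  | 0, _ | 1, _ => Commute.one_right _
  | m + 2, h =>
    have hg := (commute_heckeGen_heckeGen n q (i := m + 1) (j := k) (by omega) (by omega)).symm
    (hg.mul_right (commute_heckeGen_jm (m := m + 1) (by omega))).mul_right hg

theorem commute_jm_succ : ∀ {k : ℕ}, k ≤ n - 1 → Commute (jm n q k) (jm n q (k + 1))
  | 0, _ | 1, _ => Commute.one_left _
  | m + 2, h =>
    commute_conj_of_braid (commute_heckeGen_jm n q (by omega))
      (heckeGen_braid n q (k := m + 1) (by omega) (by omega))
      (commute_jm_succ (k := m + 1) (by omega))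

theorem heckeU_semiconjBy {k : ℕ} (hk1 : 1 ≤ k) (hkn : k ≤ n - 1) :
    SemiconjBy (heckeU n q k) (jm n q k) (jm n q (k + 1)) := by
  obtain ⟨m, rfl⟩ : ∃ m, k = m + 1 := ⟨k - 1, by omega⟩
  exact semiconjBy_sub_of_commute (heckeGen_mul_self n q hk1 hkn) (commute_jm_succ n q hkn)

theorem heckeU_mul_self {k : ℕ} (hq : q ≠ 0) (hk1 : 1 ≤ k) (hkn : k ≤ n - 1) :
    heckeU n q k * heckeU n q k =
      (q • jm n q k - q⁻¹ • jm n q (k + 1)) * (q • jm n q (k + 1) - q⁻¹ • jm n q k) := by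
  obtain ⟨m, rfl⟩ : ∃ m, k = m + 1 := ⟨k - 1, by omega⟩
  exact sub_mul_self_eq_of_commute hq (heckeGen_mul_self n q hk1 hkn) (commute_jm_succ n q hkn)

end Hecke

theorem heckeU_poly_intertwine_general (n : ℕ) (q : ℂ) (hq : q ≠ 0) (k : ℕ)
    (hk1 : 1 ≤ k) (hkn : k ≤ n - 1) (f : Polynomial ℂ) :
    heckeU n q k * Polynomial.aeval (jm n q k) f =
      Polynomial.aeval (jm n q (k + 1)) f * heckeU n q k ∧
    (Polynomial.aeval (jm n q k) f = 0 →
      Polynomial.aeval (jm n q (k + 1)) f *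
        ((q • jm n q k - q⁻¹ • jm n q (k + 1)) *
          (q • jm n q (k + 1) - q⁻¹ • jm n q k)) = 0) := by
  have hf := (heckeU_semiconjBy n q hk1 hkn).aeval_right f
  refine ⟨hf, fun hf0 => ?_⟩
  rw [← heckeU_mul_self n q hq hk1 hkn, ← mul_assoc, ← hf.eq, hf0, mul_zero, zero_mul]

/-- `U_{k+1} f(y_k) = f(y_{k+1}) U_{k+1}` for every polynomial `f`, and
consequently `f(y_k) = 0` implies
`f(y_{k+1}) (q y_k − q⁻¹ y_{k+1}) (q y_{k+1} − q⁻¹ y_k) = 0`. -/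
theorem heckeU_poly_intertwine (n : ℕ) (q : ℂ) (hn : 1 ≤ n) (hq : q ≠ 0) (k : ℕ)
    (hk1 : 1 ≤ k) (hkn : k ≤ n - 1) (f : Polynomial ℂ) :
    heckeU n q k * Polynomial.aeval (jm n q k) f =
      Polynomial.aeval (jm n q (k + 1)) f * heckeU n q k ∧
    (Polynomial.aeval (jm n q k) f = 0 →
      Polynomial.aeval (jm n q (k + 1)) f *
        ((q • jm n q k - q⁻¹ • jm n q (k + 1)) *
          (q • jm n q (k + 1) - q⁻¹ • jm n q k)) = 0) :=
  heckeU_poly_intertwine_general n q hq k hk1 hkn f
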